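/- arXiv:1408.2167 — 7 statements merged into one kernel-verified Lean document; each statement's English description precedes it below -/
import Mathlib

section
/- Let T be a nonempty tree. Then L(T) with the described order is a lattice: the order is a partial order in which every pair of elements has a least upper bound and a greatest lower bound. Explicitly, if σ, τ ∈ T are incomparable (neither is a prefix of the other) and ρ denotes their longest common prefix, then in L(T): the meet of σ and τ (both in the first copy) is ρ, the join of σ and τ is ρ*, the join of σ and τ* is ρ*, and the meet of σ and τ* is ρ; if σ and τ are comparable then the join and meet of σ and τ are the longer and shorter of the two, the join of σ and τ* is τ*, and the meet of σ and τ* is σ. The corresponding formulas for pairs σ*, τ* in the second copy hold dually. -/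
/-- `T` is a tree: a set of finite sequences of natural numbers closed under prefixes. -/
def IsTree (T : Set (List ℕ)) : Prop :=
  ∀ l ∈ T, ∀ l' : List ℕ, l' <+: l → l' ∈ T

/-- `f : ℕ → ℕ` is an infinite path of `T`: every initial segment
`[f 0, f 1, …, f (k-1)]` belongs to `T`. -/
def IsPath (T : Set (List ℕ)) (f : ℕ → ℕ) : Prop :=
  ∀ k : ℕ, (List.range k).map f ∈ T

/-- An upper bound of `A` with respect to the relation `le`. -/
def RelUpperBound {X : Type*} (le : X → X → Prop) (A : Set X) (j : X) : Prop :=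
  ∀ x ∈ A, le x j

/-- A lower bound of `A` with respect to the relation `le`. -/
def RelLowerBound {X : Type*} (le : X → X → Prop) (A : Set X) (m : X) : Prop :=
  ∀ x ∈ A, le m x

/-- `j` is a least upper bound of `A` with respect to the relation `le`. -/
def RelIsLUB {X : Type*} (le : X → X → Prop) (A : Set X) (j : X) : Prop :=
  RelUpperBound le A j ∧ ∀ k, RelUpperBound le A k → le j k

/-- `m` is a greatest lower bound of `A` with respect to the relation `le`. -/
def RelIsGLB {X : Type*} (le : X → X → Prop) (A : Set X) (m : X) : Prop :=
  RelLowerBound le A m ∧ ∀ k, RelLowerBound le A k → le k m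

/-- `c` is a compact element with respect to the relation `le`: whenever `c` is below
the supremum of a set `A`, it is below the supremum of some finite subset of `A`. -/
def RelIsCompact {X : Type*} (le : X → X → Prop) (c : X) : Prop :=
  ∀ (A : Set X) (j : X), RelIsLUB le A j → le c j →
    ∃ A' ⊆ A, A'.Finite ∧ ∃ j' : X, RelIsLUB le A' j' ∧ le c j'

/-- The underlying type of `L(T)`: the disjoint union of two copies of `T`.
`Sum.inl σ` is the element `σ` of the first copy and `Sum.inr σ` is `σ*`. -/
abbrev LTree (T : Set (List ℕ)) : Type := {l : List ℕ // l ∈ T} ⊕ {l : List ℕ // l ∈ T}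

/-- The order on `L(T)`: `σ ≤ τ` iff `σ` is a prefix of `τ`; `σ* ≤ τ*` iff `τ` is a
prefix of `σ`; `σ ≤ τ*` iff `σ` and `τ` are comparable; and never `σ* ≤ τ`. -/
def LTreeLe (T : Set (List ℕ)) : LTree T → LTree T → Prop
  | Sum.inl σ, Sum.inl τ => σ.1 <+: τ.1
  | Sum.inl σ, Sum.inr τ => σ.1 <+: τ.1 ∨ τ.1 <+: σ.1
  | Sum.inr _, Sum.inl _ => False
  | Sum.inr σ, Sum.inr τ => τ.1 <+: σ.1

/-!
Two nodes σ, τ of `T` have a longest common prefix ρ, which lies in `T` because `T` is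
prefix-closed. If σ and τ are incomparable, a list comparable with both of them is a prefix
of both (otherwise σ and τ would be comparable through it), hence a prefix of ρ. Since
`π ≤ σ*` means that π and σ are comparable, this makes ρ the meet and ρ* the join of every
incomparable pair. A comparable pair has its larger and smaller element as join and meet.
-/

namespace List

variable {α : Type*}

theorem prefix_of_comparable_of_not_comparable {σ τ π : List α}
    (hστ : ¬σ <+: τ) (hτσ : ¬τ <+: σ) (hσ : π <+: σ ∨ σ <+: π) (hτ : π <+: τ ∨ τ <+: π) :
    π <+: σ ∧ π <+: τ := by
  rcases hσ with hσ | hσ <;> rcases hτ with hτ | hτ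
  · exact ⟨hσ, hτ⟩
  · exact absurd (hτ.trans hσ) hτσ
  · exact absurd (hσ.trans hτ) hστ
  · exact (prefix_or_prefix_of_prefix hσ hτ).elim (absurd · hστ) (absurd · hτσ)

variable [DecidableEq α]

def longestCommonPrefix : List α → List α → List α
  | a :: l, b :: m => if a = b then a :: longestCommonPrefix l m else []
  | _, _ => []

theorem longestCommonPrefix_prefix_left : ∀ l m : List α, longestCommonPrefix l m <+: l
  | [], _ | _ :: _, [] => by simp [longestCommonPrefix]
  | a :: l, b :: m => by
    by_cases h : a = b
    · simpa [longestCommonPrefix, h] using longestCommonPrefix_prefix_left l m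
    · simp [longestCommonPrefix, h]

theorem longestCommonPrefix_prefix_right : ∀ l m : List α, longestCommonPrefix l m <+: m
  | [], _ | _ :: _, [] => by simp [longestCommonPrefix]
  | a :: l, b :: m => by
    by_cases h : a = b
    · subst h
      simpa [longestCommonPrefix] using longestCommonPrefix_prefix_right l m
    · simp [longestCommonPrefix, h]

theorem prefix_longestCommonPrefix {p l m : List α} (hl : p <+: l) (hm : p <+: m) :
    p <+: longestCommonPrefix l m := by
  induction p generalizing l m with
  | nil => exact nil_prefix
  | cons c p ih =>
    obtain _ | ⟨a, l⟩ := l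
    · simp at hl
    obtain _ | ⟨b, m⟩ := m
    · simp at hm
    obtain ⟨rfl, hpl⟩ := cons_prefix_cons.mp hl
    obtain ⟨rfl, hpm⟩ := cons_prefix_cons.mp hm
    simpa [longestCommonPrefix] using ih hpl hpm

end List

section RelBounds

variable {X : Type*} {le : X → X → Prop} {x y z : X}

theorem relIsLUB_pair (hx : le x z) (hy : le y z) (h : ∀ k, le x k → le y k → le z k) :
    RelIsLUB le {x, y} z :=
  ⟨by rintro _ (rfl | rfl) <;> assumption,
    fun k hk => h k (hk x (by simp)) (hk y (by simp))⟩

theorem relIsGLB_pair (hx : le z x) (hy : le z y) (h : ∀ k, le k x → le k y → le k z) :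
    RelIsGLB le {x, y} z :=
  ⟨by rintro _ (rfl | rfl) <;> assumption,
    fun k hk => h k (hk x (by simp)) (hk y (by simp))⟩

def RelHasLUBAndGLB (le : X → X → Prop) (x y : X) : Prop :=
  (∃ j, RelIsLUB le {x, y} j) ∧ ∃ m, RelIsGLB le {x, y} m

theorem RelHasLUBAndGLB.symm (h : RelHasLUBAndGLB le x y) : RelHasLUBAndGLB le y x := by
  rwa [RelHasLUBAndGLB, Set.pair_comm]

end RelBounds

namespace LTreeLe

variable {T : Set (List ℕ)}

theorem refl (x : LTree T) : LTreeLe T x x := by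
  rcases x with σ | σ <;> exact List.prefix_rfl

theorem trans : ∀ {x y z : LTree T}, LTreeLe T x y → LTreeLe T y z → LTreeLe T x z
  | .inl _, .inl _, .inl _, hxy, hyz => List.IsPrefix.trans hxy hyz
  | .inl _, .inl _, .inr _, hxy, hyz =>
    hyz.elim (fun h => .inl (List.IsPrefix.trans hxy h)) (List.prefix_or_prefix_of_prefix hxy)
  | .inl _, .inr _, .inr _, hxy, hyz =>
    hxy.elim (List.prefix_or_prefix_of_prefix · hyz) (fun h => .inr (List.IsPrefix.trans hyz h))
  | .inr _, .inr _, .inr _, hxy, hyz => List.IsPrefix.trans hyz hxy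
  | .inl _, .inr _, .inl _, _, h | .inr _, .inl _, _, h, _ | .inr _, .inr _, .inl _, _, h =>
    h.elim

theorem antisymm : ∀ {x y : LTree T}, LTreeLe T x y → LTreeLe T y x → x = y
  | .inl _, .inl _, hxy, hyx => congrArg Sum.inl (Subtype.ext (hxy.eq_of_length_le hyx.length_le))
  | .inr _, .inr _, hxy, hyx => congrArg Sum.inr (Subtype.ext (hyx.eq_of_length_le hxy.length_le))
  | .inl _, .inr _, _, h | .inr _, .inl _, h, _ => h.elim

theorem isPartialOrder : IsPartialOrder (LTree T) (LTreeLe T) where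
  refl := refl
  trans _ _ _ := trans
  antisymm _ _ := antisymm

end LTreeLe

section Bounds

variable {T : Set (List ℕ)}

theorem LTree.isLUB_isGLB_of_prefix (σ τ : {l : List ℕ // l ∈ T}) (h : σ.1 <+: τ.1) :
    RelIsLUB (LTreeLe T) {Sum.inl σ, Sum.inl τ} (Sum.inl τ)
    ∧ RelIsGLB (LTreeLe T) {Sum.inl σ, Sum.inl τ} (Sum.inl σ)
    ∧ RelIsLUB (LTreeLe T) {Sum.inl σ, Sum.inr τ} (Sum.inr τ)
    ∧ RelIsGLB (LTreeLe T) {Sum.inl σ, Sum.inr τ} (Sum.inl σ)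
    ∧ RelIsLUB (LTreeLe T) {Sum.inl τ, Sum.inr σ} (Sum.inr σ)
    ∧ RelIsGLB (LTreeLe T) {Sum.inl τ, Sum.inr σ} (Sum.inl τ)
    ∧ RelIsLUB (LTreeLe T) {Sum.inr σ, Sum.inr τ} (Sum.inr σ)
    ∧ RelIsGLB (LTreeLe T) {Sum.inr σ, Sum.inr τ} (Sum.inr τ) :=
  ⟨relIsLUB_pair h (LTreeLe.refl _) fun _ _ hy => hy,
   relIsGLB_pair (LTreeLe.refl _) h fun _ hx _ => hx,
   relIsLUB_pair (.inl h) (LTreeLe.refl _) fun _ _ hy => hy,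
   relIsGLB_pair (LTreeLe.refl _) (.inl h) fun _ hx _ => hx,
   relIsLUB_pair (.inr h) (LTreeLe.refl _) fun _ _ hy => hy,
   relIsGLB_pair (LTreeLe.refl _) (.inr h) fun _ hx _ => hx,
   relIsLUB_pair (LTreeLe.refl _) h fun _ hx _ => hx,
   relIsGLB_pair h (LTreeLe.refl _) fun _ _ hy => hy⟩

theorem LTree.isLUB_isGLB_of_not_comparable (σ τ ρ : {l : List ℕ // l ∈ T})
    (hστ : ¬σ.1 <+: τ.1) (hτσ : ¬τ.1 <+: σ.1) (hρσ : ρ.1 <+: σ.1) (hρτ : ρ.1 <+: τ.1)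
    (hρ : ∀ π : List ℕ, π <+: σ.1 → π <+: τ.1 → π <+: ρ.1) :
    RelIsGLB (LTreeLe T) {Sum.inl σ, Sum.inl τ} (Sum.inl ρ)
    ∧ RelIsLUB (LTreeLe T) {Sum.inl σ, Sum.inl τ} (Sum.inr ρ)
    ∧ RelIsLUB (LTreeLe T) {Sum.inl σ, Sum.inr τ} (Sum.inr ρ)
    ∧ RelIsGLB (LTreeLe T) {Sum.inl σ, Sum.inr τ} (Sum.inl ρ)
    ∧ RelIsLUB (LTreeLe T) {Sum.inr σ, Sum.inr τ} (Sum.inr ρ)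
    ∧ RelIsGLB (LTreeLe T) {Sum.inr σ, Sum.inr τ} (Sum.inl ρ) := by
  have below_ρ {π : List ℕ} (hσ : π <+: σ.1 ∨ σ.1 <+: π) (hτ : π <+: τ.1 ∨ τ.1 <+: π) :
      π <+: ρ.1 :=
    (List.prefix_of_comparable_of_not_comparable hστ hτσ hσ hτ).elim (hρ π)
  have not_above {π : List ℕ} (hσ : σ.1 <+: π) (hτ : τ.1 <+: π) : False :=
    (List.prefix_or_prefix_of_prefix hσ hτ).elim hστ hτσ
  refine ⟨relIsGLB_pair hρσ hρτ ?_, relIsLUB_pair (.inr hρσ) (.inr hρτ) ?_,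
    relIsLUB_pair (.inr hρσ) hρτ ?_, relIsGLB_pair hρσ (.inl hρτ) ?_,
    relIsLUB_pair hρσ hρτ ?_, relIsGLB_pair (.inl hρσ) (.inl hρτ) ?_⟩
  all_goals rintro (π | π) hσ hτ
  exacts [hρ π hσ hτ, hσ.elim, (not_above hσ hτ).elim, below_ρ hσ.symm hτ.symm, hτ.elim,
    below_ρ hσ.symm (.inl hτ), below_ρ (.inl hσ) hτ, hσ.elim, hσ.elim, hρ π hσ hτ,
    below_ρ hσ hτ, (not_above hσ hτ).elim]

theorem LTree.relHasLUBAndGLB_of_shape (hT : IsTree T) (σ τ : {l : List ℕ // l ∈ T}) :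
    RelHasLUBAndGLB (LTreeLe T) (.inl σ) (.inl τ)
    ∧ RelHasLUBAndGLB (LTreeLe T) (.inl σ) (.inr τ)
    ∧ RelHasLUBAndGLB (LTreeLe T) (.inr σ) (.inr τ) := by
  by_cases hστ : σ.1 <+: τ.1
  · obtain ⟨h₁, h₂, h₃, h₄, -, -, h₇, h₈⟩ := isLUB_isGLB_of_prefix σ τ hστ
    exact ⟨⟨⟨_, h₁⟩, _, h₂⟩, ⟨⟨_, h₃⟩, _, h₄⟩, ⟨⟨_, h₇⟩, _, h₈⟩⟩
  by_cases hτσ : τ.1 <+: σ.1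
  · obtain ⟨h₁, h₂, -, -, h₅, h₆, h₇, h₈⟩ := isLUB_isGLB_of_prefix τ σ hτσ
    exact ⟨RelHasLUBAndGLB.symm ⟨⟨_, h₁⟩, _, h₂⟩, ⟨⟨_, h₅⟩, _, h₆⟩,
      RelHasLUBAndGLB.symm ⟨⟨_, h₇⟩, _, h₈⟩⟩
  let ρ : {l : List ℕ // l ∈ T} :=
    ⟨σ.1.longestCommonPrefix τ.1, hT σ.1 σ.2 _ (List.longestCommonPrefix_prefix_left _ _)⟩
  obtain ⟨h₁, h₂, h₃, h₄, h₅, h₆⟩ := isLUB_isGLB_of_not_comparable σ τ ρ hστ hτσ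
    (List.longestCommonPrefix_prefix_left _ _) (List.longestCommonPrefix_prefix_right _ _)
    fun _ => List.prefix_longestCommonPrefix
  exact ⟨⟨⟨_, h₂⟩, _, h₁⟩, ⟨⟨_, h₃⟩, _, h₄⟩, ⟨⟨_, h₅⟩, _, h₆⟩⟩

theorem LTree.relHasLUBAndGLB (hT : IsTree T) : ∀ x y : LTree T, RelHasLUBAndGLB (LTreeLe T) x y
  | .inl σ, .inl τ => (relHasLUBAndGLB_of_shape hT σ τ).1
  | .inl σ, .inr τ => (relHasLUBAndGLB_of_shape hT σ τ).2.1
  | .inr σ, .inl τ => (relHasLUBAndGLB_of_shape hT τ σ).2.1.symm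
  | .inr σ, .inr τ => (relHasLUBAndGLB_of_shape hT σ τ).2.2

end Bounds

theorem LTree_isLattice_general (T : Set (List ℕ)) (hT : IsTree T) :
    IsPartialOrder (LTree T) (LTreeLe T)
    ∧ (∀ x y : LTree T, ∃ j, RelIsLUB (LTreeLe T) {x, y} j)
    ∧ (∀ x y : LTree T, ∃ m, RelIsGLB (LTreeLe T) {x, y} m)
    ∧ (∀ σ τ ρ : {l : List ℕ // l ∈ T},
        (¬ σ.1 <+: τ.1 ∧ ¬ τ.1 <+: σ.1) →
        (ρ.1 <+: σ.1 ∧ ρ.1 <+: τ.1 ∧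
          ∀ ρ' : List ℕ, ρ' <+: σ.1 → ρ' <+: τ.1 → ρ' <+: ρ.1) →
        RelIsGLB (LTreeLe T) {Sum.inl σ, Sum.inl τ} (Sum.inl ρ)
        ∧ RelIsLUB (LTreeLe T) {Sum.inl σ, Sum.inl τ} (Sum.inr ρ)
        ∧ RelIsLUB (LTreeLe T) {Sum.inl σ, Sum.inr τ} (Sum.inr ρ)
        ∧ RelIsGLB (LTreeLe T) {Sum.inl σ, Sum.inr τ} (Sum.inl ρ)
        ∧ RelIsLUB (LTreeLe T) {Sum.inr σ, Sum.inr τ} (Sum.inr ρ)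
        ∧ RelIsGLB (LTreeLe T) {Sum.inr σ, Sum.inr τ} (Sum.inl ρ))
    ∧ (∀ σ τ : {l : List ℕ // l ∈ T}, σ.1 <+: τ.1 →
        RelIsLUB (LTreeLe T) {Sum.inl σ, Sum.inl τ} (Sum.inl τ)
        ∧ RelIsGLB (LTreeLe T) {Sum.inl σ, Sum.inl τ} (Sum.inl σ)
        ∧ RelIsLUB (LTreeLe T) {Sum.inl σ, Sum.inr τ} (Sum.inr τ)
        ∧ RelIsGLB (LTreeLe T) {Sum.inl σ, Sum.inr τ} (Sum.inl σ)
        ∧ RelIsLUB (LTreeLe T) {Sum.inl τ, Sum.inr σ} (Sum.inr σ)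
        ∧ RelIsGLB (LTreeLe T) {Sum.inl τ, Sum.inr σ} (Sum.inl τ)
        ∧ RelIsLUB (LTreeLe T) {Sum.inr σ, Sum.inr τ} (Sum.inr σ)
        ∧ RelIsGLB (LTreeLe T) {Sum.inr σ, Sum.inr τ} (Sum.inr τ)) :=
  ⟨LTreeLe.isPartialOrder,
   fun x y => (LTree.relHasLUBAndGLB hT x y).1,
   fun x y => (LTree.relHasLUBAndGLB hT x y).2,
   fun σ τ ρ ⟨hστ, hτσ⟩ ⟨hρσ, hρτ, hρ⟩ =>
     LTree.isLUB_isGLB_of_not_comparable σ τ ρ hστ hτσ hρσ hρτ hρ,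
   LTree.isLUB_isGLB_of_prefix⟩

/-- Gr\"atzer–Schmidt paper, Proposition on `L(T)` being a lattice, with the explicit
formulas for joins and meets in terms of longest common prefixes. -/
theorem LTree_isLattice (T : Set (List ℕ)) (hT : IsTree T) (hne : [] ∈ T) :
    IsPartialOrder (LTree T) (LTreeLe T)
    ∧ (∀ x y : LTree T, ∃ j, RelIsLUB (LTreeLe T) {x, y} j)
    ∧ (∀ x y : LTree T, ∃ m, RelIsGLB (LTreeLe T) {x, y} m)
    ∧ (∀ σ τ ρ : {l : List ℕ // l ∈ T},
        (¬ σ.1 <+: τ.1 ∧ ¬ τ.1 <+: σ.1) →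
        (ρ.1 <+: σ.1 ∧ ρ.1 <+: τ.1 ∧
          ∀ ρ' : List ℕ, ρ' <+: σ.1 → ρ' <+: τ.1 → ρ' <+: ρ.1) →
        RelIsGLB (LTreeLe T) {Sum.inl σ, Sum.inl τ} (Sum.inl ρ)
        ∧ RelIsLUB (LTreeLe T) {Sum.inl σ, Sum.inl τ} (Sum.inr ρ)
        ∧ RelIsLUB (LTreeLe T) {Sum.inl σ, Sum.inr τ} (Sum.inr ρ)
        ∧ RelIsGLB (LTreeLe T) {Sum.inl σ, Sum.inr τ} (Sum.inl ρ)
        ∧ RelIsLUB (LTreeLe T) {Sum.inr σ, Sum.inr τ} (Sum.inr ρ)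
        ∧ RelIsGLB (LTreeLe T) {Sum.inr σ, Sum.inr τ} (Sum.inl ρ))
    ∧ (∀ σ τ : {l : List ℕ // l ∈ T}, σ.1 <+: τ.1 →
        RelIsLUB (LTreeLe T) {Sum.inl σ, Sum.inl τ} (Sum.inl τ)
        ∧ RelIsGLB (LTreeLe T) {Sum.inl σ, Sum.inl τ} (Sum.inl σ)
        ∧ RelIsLUB (LTreeLe T) {Sum.inl σ, Sum.inr τ} (Sum.inr τ)
        ∧ RelIsGLB (LTreeLe T) {Sum.inl σ, Sum.inr τ} (Sum.inl σ)
        ∧ RelIsLUB (LTreeLe T) {Sum.inl τ, Sum.inr σ} (Sum.inr σ)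
        ∧ RelIsGLB (LTreeLe T) {Sum.inl τ, Sum.inr σ} (Sum.inl τ)
        ∧ RelIsLUB (LTreeLe T) {Sum.inr σ, Sum.inr τ} (Sum.inr σ)
        ∧ RelIsGLB (LTreeLe T) {Sum.inr σ, Sum.inr τ} (Sum.inr τ)) :=
  LTree_isLattice_general T hT
end

section
/- Let T be a nonempty tree and suppose f : ℕ → ℕ is an infinite path of T. Then the subset S = { [f 0, f 1, …, f (k−1)] : k ∈ ℕ } of the first copy of T in L(T) has upper bounds in L(T) (namely every element σ* with σ an initial segment of f) but has no least upper bound. In particular, L(T) is not a complete lattice. -/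
/-! The initial segments of `f` form a chain of unbounded length. No element `σ` of the first
copy lies above all of them, and an element `σ*` of the second copy cannot be least: the
segment `τ` of length `|σ| + 1` gives an upper bound `τ*`, and `σ* ≤ τ*` would make `τ` a
prefix of the shorter `σ`. -/

lemma List.map_range_prefix_map_range (f : ℕ → ℕ) {m k : ℕ} (h : m ≤ k) :
    (List.range m).map f <+: (List.range k).map f := by
  obtain ⟨d, rfl⟩ := Nat.exists_eq_add_of_le h
  rw [List.range_add, List.map_append]
  exact List.prefix_append _ _

lemma List.map_range_prefix_or_prefix (f : ℕ → ℕ) (m k : ℕ) :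
    (List.range m).map f <+: (List.range k).map f ∨
      (List.range k).map f <+: (List.range m).map f :=
  (le_total m k).imp (List.map_range_prefix_map_range f) (List.map_range_prefix_map_range f)

lemma List.not_map_range_succ_length_prefix (f : ℕ → ℕ) (l : List ℕ) :
    ¬ (List.range (l.length + 1)).map f <+: l := fun h => by
  simpa using h.length_le

section LTree

variable {T : Set (List ℕ)} {f : ℕ → ℕ}

lemma LTree.relUpperBound_inr_pathSegment {k : ℕ} (h : (List.range k).map f ∈ T) :
    RelUpperBound (LTreeLe T)
      (Sum.inl '' {σ : {l : List ℕ // l ∈ T} | ∃ k : ℕ, σ.1 = (List.range k).map f})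
      (Sum.inr ⟨(List.range k).map f, h⟩) := by
  rintro _ ⟨σ, ⟨m, hm⟩, rfl⟩
  show σ.1 <+: _ ∨ _ <+: σ.1
  rw [hm]
  exact List.map_range_prefix_or_prefix f m k

lemma LTree.not_relIsLUB_pathSegments (hf : IsPath T f) (j : LTree T) :
    ¬ RelIsLUB (LTreeLe T)
      (Sum.inl '' {σ : {l : List ℕ // l ∈ T} | ∃ k : ℕ, σ.1 = (List.range k).map f}) j := by
  rintro ⟨hub, hleast⟩
  cases j with
  | inl σ =>
    exact List.not_map_range_succ_length_prefix f σ.1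
      (hub _ ⟨⟨_, hf (σ.1.length + 1)⟩, ⟨_, rfl⟩, rfl⟩)
  | inr σ =>
    exact List.not_map_range_succ_length_prefix f σ.1
      (hleast _ (LTree.relUpperBound_inr_pathSegment (hf (σ.1.length + 1))))

end LTree

theorem LTree_not_complete_of_path_general (T : Set (List ℕ))
    (f : ℕ → ℕ) (hf : IsPath T f) :
    (∀ (k : ℕ) (h : (List.range k).map f ∈ T),
        RelUpperBound (LTreeLe T)
          (Sum.inl '' {σ : {l : List ℕ // l ∈ T} | ∃ k : ℕ, σ.1 = (List.range k).map f})
          (Sum.inr ⟨(List.range k).map f, h⟩))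
    ∧ (¬ ∃ j : LTree T, RelIsLUB (LTreeLe T)
          (Sum.inl '' {σ : {l : List ℕ // l ∈ T} | ∃ k : ℕ, σ.1 = (List.range k).map f}) j)
    ∧ ¬ (∀ A : Set (LTree T),
          (∃ j, RelIsLUB (LTreeLe T) A j) ∧ (∃ m, RelIsGLB (LTreeLe T) A m)) := by
  have hnoLUB : ¬ ∃ j : LTree T, RelIsLUB (LTreeLe T)
      (Sum.inl '' {σ : {l : List ℕ // l ∈ T} | ∃ k : ℕ, σ.1 = (List.range k).map f}) j :=
    fun ⟨j, hj⟩ => LTree.not_relIsLUB_pathSegments hf j hj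
  exact ⟨fun k h => LTree.relUpperBound_inr_pathSegment h, hnoLUB,
    fun hcomplete => hnoLUB (hcomplete _).1⟩

/-- If `f` is an infinite path of `T`, then the set `S` of initial segments of `f`
(in the first copy of `T`) has upper bounds in `L(T)` — namely every `σ*` with `σ`
an initial segment of `f` — but no least upper bound; in particular `L(T)` is not
a complete lattice. -/
theorem LTree_not_complete_of_path (T : Set (List ℕ)) (hT : IsTree T) (hne : [] ∈ T)
    (f : ℕ → ℕ) (hf : IsPath T f) :
    (∀ (k : ℕ) (h : (List.range k).map f ∈ T),
        RelUpperBound (LTreeLe T)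
          (Sum.inl '' {σ : {l : List ℕ // l ∈ T} | ∃ k : ℕ, σ.1 = (List.range k).map f})
          (Sum.inr ⟨(List.range k).map f, h⟩))
    ∧ (¬ ∃ j : LTree T, RelIsLUB (LTreeLe T)
          (Sum.inl '' {σ : {l : List ℕ // l ∈ T} | ∃ k : ℕ, σ.1 = (List.range k).map f}) j)
    ∧ ¬ (∀ A : Set (LTree T),
          (∃ j, RelIsLUB (LTreeLe T) A j) ∧ (∃ m, RelIsGLB (LTreeLe T) A m)) :=
  LTree_not_complete_of_path_general T f hf
end

section
/- Let T be a nonempty tree with no infinite path. Then every subset of L(T) has a least upper bound and a greatest lower bound; that is, L(T) is a complete lattice. -/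
/-! Since `T` has no infinite path, every chain of `T` under the prefix order has a longest
element: the entries of an unbounded chain would spell out an infinite path. `Sum.swap` reverses
the order of `L(T)`, so least upper bounds are greatest lower bounds of the swapped set. If `A`
contains an unstarred `τ`, or two incomparable starred `τ₁*, τ₂*`, then every lower bound of `A` is
an unstarred prefix of `τ` (resp. `τ₁`); these form a chain, and its longest element is the
greatest lower bound. Otherwise the starred elements of `A` form a chain, and `μ*` is the greatest
lower bound for the longest `μ` among them and `[]`. -/

section PrefixChains

variable {α : Type*}

lemma isChain_setOf_prefix (ρ : List α) : IsChain (· <+: ·) {σ | σ <+: ρ} := by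
  intro σ hσ τ hτ _
  rcases le_total σ.length τ.length with h | h
  · exact Or.inl (List.prefix_of_prefix_length_le hσ hτ h)
  · exact Or.inr (List.prefix_of_prefix_length_le hτ hσ h)

lemma exists_greatest_of_isChain_prefix {S : Set (List α)} (hS : S.Nonempty)
    (hc : IsChain (· <+: ·) S) (hb : BddAbove (List.length '' S)) :
    ∃ μ ∈ S, ∀ σ ∈ S, σ <+: μ := by
  obtain ⟨μ, hμ, hμlen⟩ := Nat.sSup_mem (hS.image List.length) hb
  refine ⟨μ, hμ, fun σ hσ => (hc.total hσ hμ).elim id fun hμσ => ?_⟩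
  rw [hμσ.eq_of_length_le (hμlen ▸ le_csSup hb ⟨σ, hσ, rfl⟩)]

end PrefixChains

lemma IsTree.exists_isPath_of_isChain_of_not_bddAbove {T : Set (List ℕ)} (hT : IsTree T)
    {S : Set (List ℕ)} (hST : S ⊆ T) (hc : IsChain (· <+: ·) S)
    (hb : ¬ BddAbove (List.length '' S)) : ∃ f, IsPath T f := by
  obtain ⟨g, hgS, hglen⟩ : ∃ g : ℕ → List ℕ, (∀ n, g n ∈ S) ∧ ∀ n, n < (g n).length := by
    simpa [not_bddAbove_iff, Classical.skolem, forall_and] using hb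
  refine ⟨fun n => (g n)[n]'(hglen n), fun k => ?_⟩
  have htake : (List.range k).map (fun n => (g n)[n]'(hglen n)) = (g k).take k := by
    refine List.ext_getElem (by simpa using (hglen k).le) fun i _ _ => ?_
    simp only [List.getElem_map, List.getElem_range, List.getElem_take]
    rcases hc.total (hgS i) (hgS k) with h | h
    · exact h.getElem _
    · exact (h.getElem _).symm
  exact htake ▸ hT _ (hST (hgS k)) _ (List.take_prefix k (g k))

lemma IsTree.exists_greatest_of_isChain {T : Set (List ℕ)} (hT : IsTree T)
    (hnopath : ¬ ∃ f, IsPath T f) {S : Set (List ℕ)} (hST : S ⊆ T) (hS : S.Nonempty)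
    (hc : IsChain (· <+: ·) S) : ∃ μ ∈ S, ∀ σ ∈ S, σ <+: μ :=
  exists_greatest_of_isChain_prefix hS hc <| by_contra fun hb =>
    hnopath (hT.exists_isPath_of_isChain_of_not_bddAbove hST hc hb)

lemma relIsLUB_of_relIsGLB_image {X : Type*} {le : X → X → Prop} {e : X → X}
    (he : Function.Involutive e) (hle : ∀ x y, le (e x) (e y) ↔ le y x) {A : Set X} {m : X}
    (hm : RelIsGLB le (e '' A) m) : RelIsLUB le A (e m) := by
  refine ⟨fun x hx => ?_, fun k hk => ?_⟩
  · rw [← hle, he]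
    exact hm.1 _ ⟨x, hx, rfl⟩
  · rw [← he k, hle]
    refine hm.2 _ ?_
    rintro _ ⟨x, hx, rfl⟩
    exact (hle k x).2 (hk x hx)

namespace LTree

variable {T : Set (List ℕ)}

lemma swap_le_swap_iff (x y : LTree T) :
    LTreeLe T (Sum.swap x) (Sum.swap y) ↔ LTreeLe T y x := by
  rcases x with σ | σ <;> rcases y with τ | τ <;> simp only [Sum.swap_inl, Sum.swap_inr, LTreeLe]
  exact or_comm

lemma inl_nil_le (hne : [] ∈ T) (x : LTree T) : LTreeLe T (.inl ⟨[], hne⟩) x := by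
  rcases x with σ | σ
  exacts [List.nil_prefix, Or.inl List.nil_prefix]

lemma le_inr_nil (hne : [] ∈ T) (x : LTree T) : LTreeLe T x (.inr ⟨[], hne⟩) := by
  rcases x with σ | σ
  exacts [Or.inr List.nil_prefix, List.nil_prefix]

lemma exists_relIsGLB_of_lowerBounds_prefix (hT : IsTree T) (hne : [] ∈ T)
    (hnopath : ¬ ∃ f, IsPath T f) {A : Set (LTree T)} (ρ : List ℕ)
    (hρ : ∀ σ, RelLowerBound (LTreeLe T) A (.inl σ) → σ.1 <+: ρ)
    (hinr : ∀ κ, ¬ RelLowerBound (LTreeLe T) A (.inr κ)) :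
    ∃ m, RelIsGLB (LTreeLe T) A m := by
  set LB := {σ | ∃ h : σ ∈ T, RelLowerBound (LTreeLe T) A (.inl ⟨σ, h⟩)}
  have hLB : IsChain (· <+: ·) LB :=
    (isChain_setOf_prefix ρ).mono fun σ ⟨h, hσ⟩ => hρ ⟨σ, h⟩ hσ
  obtain ⟨μ, ⟨hμT, hμ⟩, hmax⟩ := hT.exists_greatest_of_isChain hnopath (S := LB)
    (fun σ hσ => hσ.1) ⟨[], hne, fun x _ => inl_nil_le hne x⟩ hLB
  refine ⟨.inl ⟨μ, hμT⟩, hμ, ?_⟩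
  rintro (κ | κ) hκ
  exacts [hmax κ.1 ⟨κ.2, hκ⟩, absurd hκ (hinr κ)]

lemma exists_relIsGLB_of_isChain_inr (hT : IsTree T) (hne : [] ∈ T)
    (hnopath : ¬ ∃ f, IsPath T f) {A : Set (LTree T)} (hinl : ∀ σ, .inl σ ∉ A)
    (hc : IsChain (· <+: ·) {σ | ∃ h : σ ∈ T, .inr ⟨σ, h⟩ ∈ A}) :
    ∃ m, RelIsGLB (LTreeLe T) A m := by
  have hS : IsChain (· <+: ·) (insert [] {σ | ∃ h : σ ∈ T, .inr ⟨σ, h⟩ ∈ A}) :=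
    hc.insert fun _ _ _ => Or.inl List.nil_prefix
  obtain ⟨μ, hμ, hmax⟩ := hT.exists_greatest_of_isChain hnopath
    (by rintro σ (rfl | ⟨h, -⟩); exacts [hne, h]) ⟨[], .inl rfl⟩ hS
  have hμT : μ ∈ T := by rcases hμ with rfl | ⟨h, -⟩; exacts [hne, h]
  refine ⟨.inr ⟨μ, hμT⟩, ?_, fun k hk => ?_⟩
  · rintro (σ | σ) hσ
    exacts [absurd hσ (hinl σ), hmax σ.1 (Set.mem_insert_of_mem _ ⟨σ.2, hσ⟩)]
  · rcases hμ with rfl | ⟨h, hμA⟩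
    exacts [le_inr_nil hne k, hk _ hμA]

lemma exists_relIsGLB (hT : IsTree T) (hne : [] ∈ T) (hnopath : ¬ ∃ f, IsPath T f)
    (A : Set (LTree T)) : ∃ m, RelIsGLB (LTreeLe T) A m := by
  by_cases hinl : ∃ τ, .inl τ ∈ A
  · obtain ⟨τ, hτ⟩ := hinl
    exact exists_relIsGLB_of_lowerBounds_prefix hT hne hnopath τ.1 (fun σ hσ => hσ _ hτ)
      fun κ hκ => hκ _ hτ
  by_cases hc : IsChain (· <+: ·) {σ | ∃ h : σ ∈ T, .inr ⟨σ, h⟩ ∈ A}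
  · exact exists_relIsGLB_of_isChain_inr hT hne hnopath (not_exists.mp hinl) hc
  obtain ⟨τ₁, ⟨h₁, hA₁⟩, τ₂, ⟨h₂, hA₂⟩, -, hinc⟩ :
      ∃ τ₁, (∃ h : τ₁ ∈ T, .inr ⟨τ₁, h⟩ ∈ A) ∧ ∃ τ₂, (∃ h : τ₂ ∈ T, .inr ⟨τ₂, h⟩ ∈ A) ∧
        τ₁ ≠ τ₂ ∧ ¬(τ₁ <+: τ₂ ∨ τ₂ <+: τ₁) := by
    simpa [IsChain, Set.Pairwise] using hc
  refine exists_relIsGLB_of_lowerBounds_prefix hT hne hnopath τ₁ (fun σ hσ => ?_) fun κ hκ => ?_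
  · refine (hσ _ hA₁).resolve_right fun h₁σ => hinc ?_
    rcases hσ _ hA₂ with hσ₂ | h₂σ
    · exact Or.inl (h₁σ.trans hσ₂)
    · exact (isChain_setOf_prefix σ.1).total h₁σ h₂σ
  · exact hinc ((isChain_setOf_prefix κ.1).total (hκ _ hA₁) (hκ _ hA₂))

end LTree

/-- If the nonempty tree `T` has no infinite path, then every subset of `L(T)` has a
least upper bound and a greatest lower bound, i.e. `L(T)` is a complete lattice. -/
theorem LTree_complete_of_no_path (T : Set (List ℕ)) (hT : IsTree T) (hne : [] ∈ T)
    (hnopath : ¬ ∃ f : ℕ → ℕ, IsPath T f) :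
    ∀ A : Set (LTree T),
      (∃ j, RelIsLUB (LTreeLe T) A j) ∧ (∃ m, RelIsGLB (LTreeLe T) A m) := by
  intro A
  obtain ⟨m, hm⟩ := LTree.exists_relIsGLB hT hne hnopath (Sum.swap '' A)
  exact ⟨⟨_, relIsLUB_of_relIsGLB_image Sum.swap_swap LTree.swap_le_swap_iff hm⟩,
    LTree.exists_relIsGLB hT hne hnopath A⟩
end

section
/- Let (T_n)_{n ∈ ℕ} be a family of nonempty trees. Then the poset L built from this family is a complete lattice: the described relation is a partial order and every subset of L has a least upper bound and a greatest lower bound. -/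
/-- The underlying type of the lattice `L` built from a family of trees `(T n)`:
a least element `bot`, a greatest element `top`, an element `a n` for each `n`,
and an element `node n σ` for each `n` and `σ ∈ T n`. -/
inductive BigL (T : ℕ → Set (List ℕ)) : Type
  | bot : BigL T
  | top : BigL T
  | a (n : ℕ) : BigL T
  | node (n : ℕ) (σ : {l : List ℕ // l ∈ T n}) : BigL T

/-- The order on `BigL T`: `bot ≤ x ≤ top` for all `x`; `node n σ ≤ node m τ` iff
`n = m` and `σ` is a prefix of `τ`; `node n σ ≤ a m` iff `n = m`; and no other
inequalities hold. -/
def BigLe {T : ℕ → Set (List ℕ)} : BigL T → BigL T → Prop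
  | BigL.bot, _ => True
  | _, BigL.top => True
  | BigL.a n, BigL.a m => n = m
  | BigL.node n σ, BigL.node m τ => n = m ∧ σ.1 <+: τ.1
  | BigL.node n _, BigL.a m => n = m
  | _, _ => False


/-!
Away from `⊥` and `⊤` the order splits into the components `{a n} ∪ {node n σ | σ ∈ T n}`, and
an upper bound other than `⊤` of a set containing some `x ≠ ⊥` lies in the component of `x`.
Below `node n τ` there is only `⊥` and the finite chain of prefixes of `τ`, so a set with an upper
bound `node n τ` has a greatest element; otherwise its least upper bound is `a n`, `⊤`, or, for
subsets of `{⊥}`, `⊥`. Greatest lower bounds are least upper bounds of the sets of lower bounds.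
-/

theorem List.exists_prefix_max_of_forall_prefix {α : Type*} {S : Set (List α)} {τ : List α}
    (hS : S.Nonempty) (hτ : ∀ σ ∈ S, σ <+: τ) : ∃ σ ∈ S, ∀ ρ ∈ S, ρ <+: σ := by
  have hfin : S.Finite := τ.inits.finite_toSet.subset fun σ hσ => (List.mem_inits σ τ).2 (hτ σ hσ)
  obtain ⟨σ, hσS, hσmax⟩ := S.exists_max_image List.length hfin hS
  exact ⟨σ, hσS, fun ρ hρ => List.prefix_of_prefix_length_le (hτ ρ hρ) (hτ σ hσS) (hσmax ρ hρ)⟩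

namespace BigL

variable {T : ℕ → Set (List ℕ)}

instance : PartialOrder (BigL T) where
  le := BigLe
  le_refl x := by cases x <;> simp [BigLe]
  le_trans x y z := by
    cases x <;> cases y <;> cases z <;> simp only [BigLe] <;> grind [List.IsPrefix.trans]
  le_antisymm x y := by
    cases x <;> cases y <;> simp only [BigLe] <;> try grind
    rintro ⟨rfl, h₁⟩ ⟨-, h₂⟩
    exact congrArg _ (Subtype.ext (antisymm h₁ h₂))

instance : BoundedOrder (BigL T) where
  bot := bot
  bot_le _ := trivial
  top := top
  le_top x := by cases x <;> trivial

@[simp] theorem bot_eq : (⊥ : BigL T) = bot := rfl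
@[simp] theorem top_eq : (⊤ : BigL T) = top := rfl

theorem le_a_iff {x : BigL T} {n : ℕ} : x ≤ a n ↔ x = ⊥ ∨ x = a n ∨ ∃ σ, x = node n σ := by
  refine ⟨fun h => ?_, ?_⟩
  · cases x with
    | bot => exact .inl rfl
    | top => exact h.elim
    | a m => exact .inr (.inl (congrArg a h))
    | node m σ => cases h; exact .inr (.inr ⟨σ, rfl⟩)
  · rintro (rfl | rfl | ⟨σ, rfl⟩)
    exacts [bot_le, le_rfl, rfl]

theorem le_node_iff {x : BigL T} {n : ℕ} {τ : {l // l ∈ T n}} :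
    x ≤ node n τ ↔ x = ⊥ ∨ ∃ σ : {l // l ∈ T n}, x = node n σ ∧ σ.1 <+: τ.1 := by
  refine ⟨fun h => ?_, ?_⟩
  · cases x with
    | bot => exact .inl rfl
    | node m σ => obtain ⟨rfl, hστ⟩ := h; exact .inr ⟨σ, rfl, hστ⟩
    | _ => exact h.elim
  · rintro (rfl | ⟨σ, rfl, hστ⟩)
    exacts [bot_le, ⟨rfl, hστ⟩]

theorem exists_le_a {x : BigL T} (hbot : x ≠ ⊥) (htop : x ≠ ⊤) : ∃ n, x ≤ a n := by
  cases x with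
  | bot => exact absurd rfl hbot
  | top => exact absurd rfl htop
  | a n => exact ⟨n, le_rfl⟩
  | node n σ => exact ⟨n, rfl⟩

theorem le_a_of_le {x y : BigL T} {n : ℕ} (hx : x ≠ ⊥) (hxn : x ≤ a n) (hxy : x ≤ y)
    (hy : y ≠ ⊤) : y ≤ a n := by
  cases x <;> cases y <;> simp_all [LE.le, BigLe]

theorem exists_isGreatest_of_node_mem_upperBounds {A : Set (BigL T)} {x : BigL T} {n : ℕ}
    {τ : {l // l ∈ T n}} (hxA : x ∈ A) (hx : x ≠ ⊥) (hτ : node n τ ∈ upperBounds A) :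
    ∃ j, IsGreatest A j := by
  obtain ⟨σ₀, rfl, -⟩ := (le_node_iff.1 (hτ hxA)).resolve_left hx
  obtain ⟨σ, ⟨hσT, hσA⟩, hσmax⟩ := List.exists_prefix_max_of_forall_prefix
    (S := {σ | ∃ h : σ ∈ T n, node n ⟨σ, h⟩ ∈ A}) ⟨σ₀.1, σ₀.2, hxA⟩
    fun σ ⟨_, hσA⟩ => (hτ hσA).2
  refine ⟨node n ⟨σ, hσT⟩, hσA, fun y hy => ?_⟩
  rcases le_node_iff.1 (hτ hy) with rfl | ⟨ρ, rfl, -⟩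
  · exact bot_le
  · exact ⟨rfl, hσmax ρ.1 ⟨ρ.2, hy⟩⟩

theorem exists_isLUB (A : Set (BigL T)) : ∃ j, IsLUB A j := by
  by_cases hA : A ⊆ {⊥}
  · exact ⟨⊥, fun x hx => (hA hx).le, fun _ _ => bot_le⟩
  obtain ⟨x, hxA, hx⟩ : ∃ x ∈ A, x ≠ ⊥ := Set.not_subset.1 hA
  by_cases hU : upperBounds A ⊆ {⊤}
  · exact ⟨⊤, fun _ _ => le_top, fun k hk => (hU hk).ge⟩
  obtain ⟨k, hkA, hk⟩ : ∃ k ∈ upperBounds A, k ≠ ⊤ := Set.not_subset.1 hU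
  obtain ⟨n, hkn⟩ := exists_le_a (ne_bot_of_le_ne_bot hx (hkA hxA)) hk
  by_cases hnode : ∃ τ, node n τ ∈ upperBounds A
  · obtain ⟨τ, hτ⟩ := hnode
    exact (exists_isGreatest_of_node_mem_upperBounds hxA hx hτ).imp fun _ => IsGreatest.isLUB
  refine ⟨a n, fun y hy => (hkA hy).trans hkn, fun k' hk' => ?_⟩
  by_cases htop : k' = ⊤
  · exact htop ▸ le_top
  rcases le_a_iff.1 (le_a_of_le hx ((hkA hxA).trans hkn) (hk' hxA) htop) with rfl | rfl | ⟨τ, rfl⟩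
  · exact absurd (le_bot_iff.1 (hk' hxA)) hx
  · exact le_rfl
  · exact absurd ⟨τ, hk'⟩ hnode

end BigL

theorem BigL_completeLattice_general (T : ℕ → Set (List ℕ)) :
    IsPartialOrder (BigL T) BigLe
    ∧ ∀ A : Set (BigL T), (∃ j, RelIsLUB BigLe A j) ∧ (∃ m, RelIsGLB BigLe A m) :=
  ⟨inferInstanceAs (IsPartialOrder (BigL T) (· ≤ ·)), fun A =>
    ⟨BigL.exists_isLUB A, (BigL.exists_isLUB (lowerBounds A)).imp fun _ => isLUB_lowerBounds.1⟩⟩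

/-- The poset `L` built from a family of nonempty trees is a complete lattice. -/
theorem BigL_completeLattice (T : ℕ → Set (List ℕ))
    (hT : ∀ n, IsTree (T n)) (hne : ∀ n, [] ∈ T n) :
    IsPartialOrder (BigL T) BigLe
    ∧ ∀ A : Set (BigL T), (∃ j, RelIsLUB BigLe A j) ∧ (∃ m, RelIsGLB BigLe A m) :=
  BigL_completeLattice_general T
end

section
/- Let T be a nonempty tree. Then the poset T[a] is a complete lattice: the described relation is a partial order and every subset of T[a] has a least upper bound and a greatest lower bound. In particular, any infinite subset of T[a] not containing 1 whose supremum is not a or an element of T has supremum 1. -/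
/-- The underlying type of the lattice `T[a]`: the elements of `T` together with
three additional elements `0`, `a`, `1`. -/
inductive TreeA (T : Set (List ℕ)) : Type
  | bot : TreeA T
  | top : TreeA T
  | a : TreeA T
  | node (σ : {l : List ℕ // l ∈ T}) : TreeA T

/-- The order on `T[a]`: `bot` is least, `top` is greatest, `node σ ≤ node τ` iff
`σ` is a prefix of `τ`, and `a` is incomparable with every element of `T`. -/
def TreeALe {T : Set (List ℕ)} : TreeA T → TreeA T → Prop
  | TreeA.bot, _ => True
  | _, TreeA.top => True
  | TreeA.a, TreeA.a => True
  | TreeA.node σ, TreeA.node τ => σ.1 <+: τ.1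
  | _, _ => False

theorem List.exists_forall_prefix_of_forall_prefix {α : Type*} {S : Set (List α)}
    {τ : List α} (hne : S.Nonempty) (hS : ∀ σ ∈ S, σ <+: τ) :
    ∃ μ ∈ S, ∀ σ ∈ S, σ <+: μ := by
  have hfin : Set.Finite S := τ.inits.finite_toSet.subset fun σ hσ => (mem_inits σ τ).2 (hS σ hσ)
  obtain ⟨μ, hμ, hmax⟩ := Set.exists_max_image S length hfin hne
  exact ⟨μ, hμ, fun σ hσ => List.prefix_of_prefix_length_le (hS σ hσ) (hS μ hμ) (hmax σ hσ)⟩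

section RelBounds

variable {X : Type*} {le : X → X → Prop}

theorem relIsLUB_of_mem {A : Set X} {j : X} (hj : j ∈ A) (hub : RelUpperBound le A j) :
    RelIsLUB le A j :=
  ⟨hub, fun _ hk => hk j hj⟩

theorem exists_relIsGLB_of_forall_exists_relIsLUB (h : ∀ A : Set X, ∃ j, RelIsLUB le A j)
    (A : Set X) : ∃ m, RelIsGLB le A m := by
  obtain ⟨m, hub, hleast⟩ := h {x | RelLowerBound le A x}
  exact ⟨m, fun x hx => hleast x fun y hy => hy x hx, fun k hk => hub k hk⟩

end RelBounds

namespace TreeA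

variable {T : Set (List ℕ)}

theorem treeALe_top (x : TreeA T) : TreeALe x top := by
  cases x <;> trivial

theorem bot_treeALe (x : TreeA T) : TreeALe bot x := trivial

theorem isPartialOrder_treeALe : IsPartialOrder (TreeA T) TreeALe where
  refl x := by cases x <;> simp [TreeALe]
  trans x y z hxy hyz := by
    cases x <;> cases y <;> cases z <;> simp_all [TreeALe]
    exact hxy.trans hyz
  antisymm x y hxy hyx := by
    cases x <;> cases y <;> simp_all [TreeALe]
    exact Subtype.ext (hxy.sublist.antisymm hyx.sublist)

theorem subset_singleton_bot_of_relUpperBound_bot {A : Set (TreeA T)}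
    (h : RelUpperBound TreeALe A bot) : A ⊆ {bot} := by
  intro x hx
  have := h x hx
  cases x <;> simp_all [TreeALe]

theorem relIsLUB_bot_of_subset {A : Set (TreeA T)} (h : A ⊆ {bot}) : RelIsLUB TreeALe A bot :=
  ⟨fun _ hx => h hx ▸ bot_treeALe bot, fun k _ => bot_treeALe k⟩

theorem exists_relIsLUB_of_relUpperBound_a {A : Set (TreeA T)} (h : RelUpperBound TreeALe A a) :
    ∃ j, RelIsLUB TreeALe A j := by
  by_cases ha : a ∈ A
  · exact ⟨a, relIsLUB_of_mem ha h⟩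
  refine ⟨bot, relIsLUB_bot_of_subset fun x hx => ?_⟩
  have := h x hx
  cases x <;> simp_all [TreeALe]

theorem exists_relIsLUB_of_relUpperBound_node {A : Set (TreeA T)} {τ : {l : List ℕ // l ∈ T}}
    (h : RelUpperBound TreeALe A (node τ)) : ∃ j, RelIsLUB TreeALe A j := by
  by_cases hnode : ∃ σ, node σ ∈ A
  · obtain ⟨σ₀, hσ₀⟩ := hnode
    obtain ⟨_, ⟨μ, hμ, rfl⟩, hmax⟩ :=
      List.exists_forall_prefix_of_forall_prefix (S := Subtype.val '' {σ | node σ ∈ A})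
        ⟨σ₀.1, σ₀, hσ₀, rfl⟩ (by rintro _ ⟨σ, hσ, rfl⟩; exact h _ hσ)
    refine ⟨node μ, relIsLUB_of_mem hμ fun x hx => ?_⟩
    have := h x hx
    cases x with
    | node σ => exact hmax σ.1 ⟨σ, hx, rfl⟩
    | _ => simp_all [TreeALe]
  · refine ⟨bot, relIsLUB_bot_of_subset fun x hx => ?_⟩
    have := h x hx
    cases x <;> simp_all [TreeALe]

theorem exists_relIsLUB (A : Set (TreeA T)) : ∃ j, RelIsLUB TreeALe A j := by
  by_cases h : ∃ k ≠ top, RelUpperBound TreeALe A k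
  · obtain ⟨k, hk, hub⟩ := h
    cases k with
    | bot => exact ⟨bot, relIsLUB_bot_of_subset (subset_singleton_bot_of_relUpperBound_bot hub)⟩
    | top => exact absurd rfl hk
    | a => exact exists_relIsLUB_of_relUpperBound_a hub
    | node τ => exact exists_relIsLUB_of_relUpperBound_node hub
  · refine ⟨top, fun x _ => treeALe_top x, fun k hk => ?_⟩
    obtain rfl : k = top := by_contra fun hne => h ⟨k, hne, hk⟩
    exact treeALe_top top

end TreeA

theorem TreeA_completeLattice_general (T : Set (List ℕ)) :
    IsPartialOrder (TreeA T) TreeALe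
    ∧ (∀ A : Set (TreeA T), (∃ j, RelIsLUB TreeALe A j) ∧ (∃ m, RelIsGLB TreeALe A m))
    ∧ (∀ A : Set (TreeA T), A.Infinite → TreeA.top ∉ A →
        ∀ j : TreeA T, RelIsLUB TreeALe A j → j ≠ TreeA.a →
          (∀ σ : {l : List ℕ // l ∈ T}, j ≠ TreeA.node σ) → j = TreeA.top) := by
  refine ⟨TreeA.isPartialOrder_treeALe, fun A =>
    ⟨TreeA.exists_relIsLUB A, exists_relIsGLB_of_forall_exists_relIsLUB TreeA.exists_relIsLUB A⟩, ?_⟩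
  intro A hinf _ j hj hja hjnode
  cases j with
  | top => rfl
  | a => exact absurd rfl hja
  | node σ => exact absurd rfl (hjnode σ)
  | bot =>
    exact absurd ((Set.finite_singleton TreeA.bot).subset
      (TreeA.subset_singleton_bot_of_relUpperBound_bot hj.1)) hinf

/-- `T[a]` is a complete lattice; in particular, any infinite subset of `T[a]` not
containing `1` whose supremum is not `a` or an element of `T` has supremum `1`. -/
theorem TreeA_completeLattice (T : Set (List ℕ)) (hT : IsTree T) (hne : [] ∈ T) :
    IsPartialOrder (TreeA T) TreeALe
    ∧ (∀ A : Set (TreeA T), (∃ j, RelIsLUB TreeALe A j) ∧ (∃ m, RelIsGLB TreeALe A m))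
    ∧ (∀ A : Set (TreeA T), A.Infinite → TreeA.top ∉ A →
        ∀ j : TreeA T, RelIsLUB TreeALe A j → j ≠ TreeA.a →
          (∀ σ : {l : List ℕ // l ∈ T}, j ≠ TreeA.node σ) → j = TreeA.top) :=
  TreeA_completeLattice_general T
end

section
/- Let T be a nonempty tree with no infinite path. Then every element of the complete lattice T[a] is compact; in particular T[a] is compactly generated (every element is the supremum of the compact elements below it). -/
/-!
In `T[a]` the down-set of every element other than `1` is a chain, so two incomparable
elements have `1` as their only upper bound. Since `T` has no infinite path, every nonempty
chain of `T[a]` has a greatest element: a chain of nodes with unbounded lengths would spell out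
a path. Hence the supremum of any set is already the supremum of at most two of its elements
(its greatest element if it is a chain, an incomparable pair otherwise), so every element is
compact.
-/

section Order

variable {α : Type*}

theorem relIsCompact_of_exists_finite_isLUB [Preorder α]
    (h : ∀ (A : Set α) (j : α), IsLUB A j → ∃ A' ⊆ A, A'.Finite ∧ IsLUB A' j) (c : α) :
    RelIsCompact (· ≤ ·) c := fun A j hj hcj =>
  let ⟨A', hA', hfin, hA'j⟩ := h A j hj
  ⟨A', hA', hfin, j, hA'j, hcj⟩

theorem isLUB_setOf_relIsCompact_le [Preorder α] {x : α} (hx : RelIsCompact (· ≤ ·) x) :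
    IsLUB {c | RelIsCompact (· ≤ ·) c ∧ c ≤ x} x :=
  IsGreatest.isLUB ⟨⟨hx, le_rfl⟩, fun _ hc => hc.2⟩

theorem exists_finite_subset_isLUB [PartialOrder α] [OrderTop α]
    (hIic : ∀ k : α, k ≠ ⊤ → IsChain (· ≤ ·) (Set.Iic k))
    (hchain : ∀ s : Set α, IsChain (· ≤ ·) s → s.Nonempty → ∃ g, IsGreatest s g)
    {A : Set α} {j : α} (hj : IsLUB A j) : ∃ A' ⊆ A, A'.Finite ∧ IsLUB A' j := by
  rcases A.eq_empty_or_nonempty with rfl | hne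
  · exact ⟨∅, subset_rfl, Set.finite_empty, hj⟩
  by_cases hA : IsChain (· ≤ ·) A
  · obtain ⟨g, hg⟩ := hchain A hA hne
    refine ⟨{g}, Set.singleton_subset_iff.2 hg.1, Set.finite_singleton g, ?_⟩
    rw [← hg.isLUB.unique hj]
    exact isLUB_singleton
  obtain ⟨x, hx, y, hy, -, hxy⟩ : ∃ x ∈ A, ∃ y ∈ A, x ≠ y ∧ ¬(x ≤ y ∨ y ≤ x) := by
    simpa [IsChain, Set.Pairwise] using hA
  have htop : ∀ k ∈ upperBounds {x, y}, k = ⊤ := fun k hk => by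
    by_contra hk'
    exact hxy (hIic k hk' |>.total (hk (Set.mem_insert x _)) (hk (Set.mem_insert_of_mem x rfl)))
  have hsub : {x, y} ⊆ A := Set.insert_subset hx (Set.singleton_subset_iff.2 hy)
  refine ⟨{x, y}, hsub, Set.toFinite _, ?_⟩
  rw [htop j (upperBounds_mono_set hsub hj.1)]
  exact ⟨fun _ _ => le_top, fun k hk => (htop k hk).ge⟩

end Order

theorem IsTree.exists_isPath_of_isChain {T C : Set (List ℕ)} (hT : IsTree T) (hCT : C ⊆ T)
    (hC : IsChain (· <+: ·) C) (hunb : ∀ n, ∃ l ∈ C, n < l.length) :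
    ∃ f : ℕ → ℕ, IsPath T f := by
  choose g hgC hlen using hunb
  have hagree : ∀ i k (hk : i < (g k).length), (g i)[i]'(hlen i) = (g k)[i] := by
    intro i k hk
    rcases hC.total (hgC i) (hgC k) with h | h
    · exact h.getElem _
    · exact (h.getElem hk).symm
  refine ⟨fun n => (g n)[n]'(hlen n), fun k => ?_⟩
  have htake : (List.range k).map (fun n => (g n)[n]'(hlen n)) = (g k).take k := by
    refine List.ext_getElem (by simp [(hlen k).le]) fun i hi _ => ?_
    simp only [List.getElem_map, List.getElem_range, List.getElem_take]
    exact hagree i k _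
  rw [htake]
  exact hT _ (hCT (hgC k)) _ (List.take_prefix k _)

theorem exists_prefix_greatest_of_isChain_of_bddAbove {β : Type*} {C : Set (List β)}
    (hC : IsChain (· <+: ·) C) (hne : C.Nonempty) (hbdd : BddAbove (List.length '' C)) :
    ∃ m ∈ C, ∀ l ∈ C, l <+: m := by
  obtain ⟨_, ⟨m, hmC, rfl⟩, hmax⟩ := hbdd.exists_isGreatest_of_nonempty (hne.image _)
  refine ⟨m, hmC, fun l hl => (hC.total hl hmC).elim id fun hml => ?_⟩
  rw [hml.eq_of_length_le (hmax ⟨l, hl, rfl⟩)]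

theorem IsTree.exists_prefix_greatest_of_isChain {T C : Set (List ℕ)} (hT : IsTree T)
    (hnopath : ¬ ∃ f : ℕ → ℕ, IsPath T f) (hCT : C ⊆ T) (hC : IsChain (· <+: ·) C)
    (hne : C.Nonempty) : ∃ m ∈ C, ∀ l ∈ C, l <+: m := by
  refine exists_prefix_greatest_of_isChain_of_bddAbove hC hne ?_
  by_contra hunb
  simp only [not_bddAbove_iff, Set.mem_image, exists_exists_and_eq_and] at hunb
  exact hnopath (hT.exists_isPath_of_isChain hCT hC hunb)

namespace TreeA

variable {T : Set (List ℕ)}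

instance : PartialOrder (TreeA T) where
  le := TreeALe
  le_refl x := by cases x <;> simp [TreeALe]
  le_trans x y z := by
    cases x <;> cases y <;> cases z <;> simp only [TreeALe, imp_self, implies_true, true_implies,
      IsEmpty.forall_iff]
    exact List.IsPrefix.trans
  le_antisymm x y := by
    cases x <;> cases y <;> simp [TreeALe]
    exact fun h h' => Subtype.ext (h.eq_of_length_le h'.length_le)

instance : BoundedOrder (TreeA T) where
  top := top
  le_top x := by cases x <;> trivial
  bot := bot
  bot_le _ := trivial

theorem le_def {x y : TreeA T} : x ≤ y ↔ TreeALe x y := Iff.rfl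

theorem top_def : (⊤ : TreeA T) = top := rfl

theorem bot_def : (⊥ : TreeA T) = bot := rfl

theorem isChain_Iic {k : TreeA T} (hk : k ≠ ⊤) : IsChain (· ≤ ·) (Set.Iic k) := by
  intro x hx y hy _
  cases k <;> cases x <;> cases y <;> simp_all [le_def, TreeALe, top_def]
  exact List.prefix_or_prefix_of_prefix ‹_› ‹_›

theorem exists_isGreatest_of_isChain (hT : IsTree T) (hnopath : ¬ ∃ f : ℕ → ℕ, IsPath T f)
    {s : Set (TreeA T)} (hs : IsChain (· ≤ ·) s) (hne : s.Nonempty) : ∃ g, IsGreatest s g := by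
  by_cases htop : top ∈ s
  · exact ⟨⊤, htop, fun _ _ => le_top⟩
  by_cases ha : a ∈ s
  · refine ⟨a, ha, fun x hx => (hs.total hx ha).elim id fun hax => ?_⟩
    cases x <;> simp_all [le_def, TreeALe]
  set C : Set (List ℕ) := {l | ∃ h : l ∈ T, node ⟨l, h⟩ ∈ s}
  rcases C.eq_empty_or_nonempty with hC | hC
  · have hbot : ∀ x ∈ s, x = ⊥ := by
      intro x hx
      cases x with
      | node σ => exact (hC.subset ⟨σ.2, hx⟩).elim
      | _ => simp_all [bot_def]
    obtain ⟨x, hx⟩ := hne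
    exact ⟨⊥, hbot x hx ▸ hx, fun y hy => (hbot y hy).le⟩
  obtain ⟨m, ⟨hmT, hms⟩, hmax⟩ := hT.exists_prefix_greatest_of_isChain hnopath
    (fun l hl => hl.1) (fun _ hl _ hl' hll' => hs hl.2 hl'.2 (by simpa using hll')) hC
  refine ⟨node ⟨m, hmT⟩, hms, fun x hx => ?_⟩
  cases x with
  | node σ => exact hmax σ.1 ⟨σ.2, hx⟩
  | _ => simp_all [le_def, TreeALe]

end TreeA

theorem TreeA_compactlyGenerated_of_no_path_general (T : Set (List ℕ)) (hT : IsTree T)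
    (hnopath : ¬ ∃ f : ℕ → ℕ, IsPath T f) :
    (∀ x : TreeA T, RelIsCompact (TreeALe (T := T)) x)
    ∧ (∀ x : TreeA T,
        RelIsLUB TreeALe {c : TreeA T | RelIsCompact (TreeALe (T := T)) c ∧ TreeALe c x} x) := by
  have hcompact : ∀ x : TreeA T, RelIsCompact (· ≤ ·) x :=
    relIsCompact_of_exists_finite_isLUB fun _ _ =>
      exists_finite_subset_isLUB (fun _ => TreeA.isChain_Iic)
        (fun _ => TreeA.exists_isGreatest_of_isChain hT hnopath)
  exact ⟨hcompact, fun x => isLUB_setOf_relIsCompact_le (hcompact x)⟩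

/-- If the nonempty tree `T` has no infinite path, then every element of the complete
lattice `T[a]` is compact; in particular `T[a]` is compactly generated: every element
is the supremum of the compact elements below it. -/
theorem TreeA_compactlyGenerated_of_no_path (T : Set (List ℕ)) (hT : IsTree T)
    (hne : [] ∈ T) (hnopath : ¬ ∃ f : ℕ → ℕ, IsPath T f) :
    (∀ x : TreeA T, RelIsCompact (TreeALe (T := T)) x)
    ∧ (∀ x : TreeA T,
        RelIsLUB TreeALe {c : TreeA T | RelIsCompact (TreeALe (T := T)) c ∧ TreeALe c x} x) :=
  TreeA_compactlyGenerated_of_no_path_general T hT hnopath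
end

section
/- Let T be a nonempty tree. The complete lattice T[a] is compactly generated (equivalently, since T[a] is always complete, T[a] is an algebraic lattice) if and only if T has no infinite path. -/
/-! Without an infinite path every element of `T[a]` is compact, so `T[a]` is trivially compactly
generated. Below an element other than `1` there are only finitely many elements. If `sup A = 1`
and no finite subset of `A` has supremum `1`, then any two elements of `A` have a common upper
bound other than `1`; so `1 ∉ A`, `a` and a node do not both lie in `A`, and the nodes of `A`
form a chain of prefixes. That chain is finite (an infinite one is an infinite path), so `A` is
bounded below `1`, a contradiction.

Conversely, the initial segments of an infinite path have supremum `1`, but finitely many of them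
are bounded by one of them, which is not above `a`. So `a` is not compact, and the only compact
element below `a` is `0`. -/

theorem exists_isPath_of_infinite_chain {T S : Set (List ℕ)} (hT : IsTree T) (hST : S ⊆ T)
    (hS : IsChain (· <+: ·) S) (hinf : S.Infinite) : ∃ f, IsPath T f := by
  have hlong : ∀ n, ∃ l ∈ S, n < l.length := by
    have hlength : S.InjOn List.length := fun l hl l' hl' hlen =>
      (hS.total hl hl').elim (·.eq_of_length hlen) (·.eq_of_length hlen.symm |>.symm)
    intro n
    obtain ⟨_, ⟨l, hl, rfl⟩, hn⟩ := (hinf.image hlength).exists_gt n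
    exact ⟨l, hl, hn⟩
  choose L hLS hLlen using hlong
  refine ⟨fun n => (L n)[n]'(hLlen n), fun k => ?_⟩
  have hsegment : (List.range k).map (fun n => (L n)[n]'(hLlen n)) = (L k).take k := by
    refine List.ext_getElem (by simpa using (hLlen k).le) fun n hn _ => ?_
    have hnk : n < k := by simpa using hn
    simp only [List.getElem_map, List.getElem_range, List.getElem_take]
    exact (hS.total (hLS n) (hLS k)).elim (·.getElem _) fun h => (h.getElem _).symm
  exact hsegment ▸ hT _ (hST (hLS k)) _ (List.take_prefix k (L k))

section TreeALe

variable {T : Set (List ℕ)}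

theorem treeALe_refl (x : TreeA T) : TreeALe x x := by
  cases x
  case node σ => exact List.prefix_refl σ.1
  all_goals trivial

theorem treeALe_top (x : TreeA T) : TreeALe x .top := by
  cases x <;> trivial

theorem treeALe_trans {x y z : TreeA T} (hxy : TreeALe x y) (hyz : TreeALe y z) :
    TreeALe x z := by
  cases x <;> cases y <;> cases z <;> first
    | trivial
    | exact hxy.elim
    | exact hyz.elim
    | exact List.IsPrefix.trans hxy hyz

theorem eq_top_of_top_treeALe {x : TreeA T} (h : TreeALe .top x) : x = .top := by
  cases x <;> first | rfl | exact h.elim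

theorem eq_bot_or_eq_a_of_treeALe_a {x : TreeA T} (h : TreeALe x .a) : x = .bot ∨ x = .a := by
  cases x <;> first | exact h.elim | simp

theorem eq_a_or_eq_top_of_a_treeALe {x : TreeA T} (h : TreeALe .a x) : x = .a ∨ x = .top := by
  cases x <;> first | exact h.elim | simp

theorem relIsLUB_top_iff {A : Set (TreeA T)} :
    RelIsLUB TreeALe A .top ↔ ∀ k, RelUpperBound TreeALe A k → k = .top :=
  ⟨fun h k hk => eq_top_of_top_treeALe (h.2 k hk),
    fun h => ⟨fun x _ => treeALe_top x, fun k hk => h k hk ▸ treeALe_refl _⟩⟩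

theorem finite_setOf_treeALe {j : TreeA T} (hj : j ≠ .top) : {y | TreeALe y j}.Finite := by
  cases j
  case top => exact absurd rfl hj
  case node τ =>
    have hprefixes : {σ : {l // l ∈ T} | σ.1 <+: τ.1}.Finite :=
      (τ.1.inits.finite_toSet.preimage Subtype.val_injective.injOn).subset
        fun σ hσ => List.mem_inits _ _ |>.2 hσ
    refine ((hprefixes.image TreeA.node).insert .bot).subset fun y hy => ?_
    cases y
    case bot => exact Set.mem_insert _ _
    case node σ => exact Set.mem_insert_of_mem _ ⟨σ, hy, rfl⟩
    all_goals exact hy.elim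
  all_goals
    refine (Set.toFinite {TreeA.bot, TreeA.a}).subset fun y hy => ?_
    cases y <;> first | exact hy.elim | simp

theorem relUpperBound_of_forall_node {A : Set (TreeA T)} (htop : .top ∉ A) (ha : .a ∉ A)
    {k : TreeA T} (hnode : ∀ σ, TreeA.node σ ∈ A → TreeALe (.node σ) k) :
    RelUpperBound TreeALe A k := by
  intro x hx
  cases x
  case bot => trivial
  case top => exact absurd hx htop
  case a => exact absurd hx ha
  case node σ => exact hnode σ hx

theorem exists_upperBound_ne_top_of_pairwise (hT : IsTree T) (hnp : ¬ ∃ f, IsPath T f)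
    {A : Set (TreeA T)} (hA : ∀ x ∈ A, ∀ y ∈ A, ∃ k ≠ .top, TreeALe x k ∧ TreeALe y k) :
    ∃ k ≠ .top, RelUpperBound TreeALe A k := by
  have htop : .top ∉ A := fun h => by
    obtain ⟨k, hk, hle, -⟩ := hA _ h _ h
    exact hk (eq_top_of_top_treeALe hle)
  by_cases ha : TreeA.a ∈ A
  · refine ⟨.a, nofun, fun x hx => ?_⟩
    obtain ⟨k, hk, hak, hxk⟩ := hA _ ha _ hx
    obtain rfl := (eq_a_or_eq_top_of_a_treeALe hak).resolve_right hk
    exact hxk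
  set S := {l | ∃ h : l ∈ T, TreeA.node ⟨l, h⟩ ∈ A}
  have hchain : IsChain (· <+: ·) S := by
    rintro l ⟨hl, hlA⟩ l' ⟨hl', hl'A⟩ -
    obtain ⟨k, hk, hlk, hl'k⟩ := hA _ hlA _ hl'A
    cases k
    case node υ => exact List.prefix_or_prefix_of_prefix hlk hl'k
    case top => exact absurd rfl hk
    all_goals exact hlk.elim
  have hfin : S.Finite := by
    by_contra hinf
    exact hnp (exists_isPath_of_infinite_chain hT (fun l hl => hl.1) hchain hinf)
  rcases S.eq_empty_or_nonempty with hempty | hnonempty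
  · refine ⟨.bot, nofun, relUpperBound_of_forall_node htop ha fun σ hσ => ?_⟩
    exact (Set.eq_empty_iff_forall_notMem.1 hempty σ.1 ⟨σ.2, hσ⟩).elim
  · obtain ⟨μ, hμ, hlongest⟩ := Set.exists_max_image S List.length hfin hnonempty
    refine ⟨.node ⟨μ, hμ.1⟩, nofun, relUpperBound_of_forall_node htop ha fun σ hσ => ?_⟩
    have hσS : σ.1 ∈ S := ⟨σ.2, hσ⟩
    refine (hchain.total hσS hμ).elim id fun hμσ => ?_
    show σ.1 <+: μ
    rw [hμσ.eq_of_length_le (hlongest _ hσS)]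

theorem exists_finite_relIsLUB_top (hT : IsTree T) (hnp : ¬ ∃ f, IsPath T f)
    {A : Set (TreeA T)} (hA : RelIsLUB TreeALe A .top) :
    ∃ A' ⊆ A, A'.Finite ∧ RelIsLUB TreeALe A' .top := by
  by_contra! hnone
  have hpair (x) (hx : x ∈ A) (y) (hy : y ∈ A) : ∃ k ≠ .top, TreeALe x k ∧ TreeALe y k := by
    have hxy := hnone {x, y} (Set.insert_subset hx (Set.singleton_subset_iff.2 hy)) (Set.toFinite _)
    simp only [relIsLUB_top_iff, not_forall] at hxy
    obtain ⟨k, hub, hk⟩ := hxy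
    exact ⟨k, hk, hub x (by simp), hub y (by simp)⟩
  obtain ⟨k, hk, hub⟩ := exists_upperBound_ne_top_of_pairwise hT hnp hpair
  exact hk (relIsLUB_top_iff.1 hA k hub)

theorem relIsCompact_of_not_exists_isPath (hT : IsTree T) (hnp : ¬ ∃ f, IsPath T f)
    (c : TreeA T) : RelIsCompact TreeALe c := by
  intro A j hA hcj
  by_cases hj : j = .top
  · subst hj
    obtain ⟨A', hA'A, hfin, hA'⟩ := exists_finite_relIsLUB_top hT hnp hA
    exact ⟨A', hA'A, hfin, .top, hA', treeALe_top c⟩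
  · exact ⟨A, subset_rfl, (finite_setOf_treeALe hj).subset hA.1, j, hA, hcj⟩

def IsPath.initialSegment {f : ℕ → ℕ} (hf : IsPath T f) (k : ℕ) : TreeA T :=
  .node ⟨(List.range k).map f, hf k⟩

theorem IsPath.initialSegment_injective {f : ℕ → ℕ} (hf : IsPath T f) :
    Function.Injective hf.initialSegment := fun k m h => by
  simpa using congrArg List.length (Subtype.ext_iff.1 (TreeA.node.inj h))

theorem IsPath.initialSegment_treeALe {f : ℕ → ℕ} (hf : IsPath T f) {k m : ℕ} (hkm : k ≤ m) :
    TreeALe (hf.initialSegment k) (hf.initialSegment m) := by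
  show (List.range k).map f <+: (List.range m).map f
  have hrange : List.range k = (List.range m).take k := by
    rw [List.take_range, min_eq_left hkm]
  exact hrange ▸ (List.take_prefix k _).map f

theorem IsPath.relIsLUB_range_initialSegment {f : ℕ → ℕ} (hf : IsPath T f) :
    RelIsLUB TreeALe (Set.range hf.initialSegment) .top := by
  refine relIsLUB_top_iff.2 fun k hk => ?_
  cases k
  case top => rfl
  case node τ =>
    have hlen := (hk _ ⟨τ.1.length + 1, rfl⟩ : (List.range _).map f <+: τ.1).length_le
    simp at hlen
  all_goals exact (hk _ ⟨0, rfl⟩).elim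

theorem IsPath.not_relIsCompact_a {f : ℕ → ℕ} (hf : IsPath T f) :
    ¬ RelIsCompact TreeALe (TreeA.a : TreeA T) := by
  intro hc
  obtain ⟨A', hA'A, hfin, j', hj', haj'⟩ :=
    hc _ _ hf.relIsLUB_range_initialSegment (treeALe_top _)
  obtain ⟨m, hm⟩ := (hfin.preimage hf.initialSegment_injective.injOn).bddAbove
  have hub : RelUpperBound TreeALe A' (hf.initialSegment m) := by
    intro y hy
    obtain ⟨k, rfl⟩ := hA'A hy
    exact hf.initialSegment_treeALe (hm hy)
  -- `TreeALe .a (.node _)` reduces to `False`.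
  exact treeALe_trans haj' (hj'.2 _ hub)

end TreeALe

theorem TreeA_algebraic_iff_no_path_general (T : Set (List ℕ)) (hT : IsTree T) :
    (∀ x : TreeA T,
        RelIsLUB TreeALe {c : TreeA T | RelIsCompact (TreeALe (T := T)) c ∧ TreeALe c x} x) ↔
      ¬ ∃ f : ℕ → ℕ, IsPath T f := by
  constructor
  · rintro h ⟨f, hf⟩
    refine (h .a).2 .bot fun c ⟨hc, hca⟩ => ?_
    obtain rfl | rfl := eq_bot_or_eq_a_of_treeALe_a hca
    · trivial
    · exact absurd hc hf.not_relIsCompact_a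
  · intro hnp x
    exact ⟨fun c hc => hc.2,
      fun k hk => hk x ⟨relIsCompact_of_not_exists_isPath hT hnp x, treeALe_refl x⟩⟩

/-- The complete lattice `T[a]` is compactly generated (every element is the supremum
of the compact elements below it) — equivalently, `T[a]` is an algebraic lattice —
if and only if `T` has no infinite path. -/
theorem TreeA_algebraic_iff_no_path (T : Set (List ℕ)) (hT : IsTree T) (hne : [] ∈ T) :
    (∀ x : TreeA T,
        RelIsLUB TreeALe {c : TreeA T | RelIsCompact (TreeALe (T := T)) c ∧ TreeALe c x} x) ↔
      ¬ ∃ f : ℕ → ℕ, IsPath T f :=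
  TreeA_algebraic_iff_no_path_general T hT
end
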